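/- arXiv:0906.0693 — 6 statements merged into one kernel-verified Lean document; each statement's English description precedes it below -/
import Mathlib

section
/- Let C₁ and C₂ be disjoint finite sets with |C₁| = s and |C₂| = t, and let i be an integer. Then the number of subsets X ⊆ C₁ ∪ C₂ with (|X ∩ C₂| : ℤ) − (|X ∩ C₁| : ℤ) = i equals the binomial coefficient C(s + t, t − i), interpreted as 0 when t − i < 0 or t − i > s + t. -/
/-!
Symmetric difference with `C₁` is an involution of the subsets of `C₁ ∪ C₂` that sends a subset
`X` to one of size `|C₁ \ X| + |X ∩ C₂| = s + (|X ∩ C₂| - |X ∩ C₁|)`. So the subsets with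
difference `i` correspond to the `(s + i)`-subsets of an `(s + t)`-set, and
`C(s + t, s + i) = C(s + t, t - i)`.
-/

open scoped symmDiff

namespace Finset

variable {α : Type*}

theorem card_filter_powerset_card_eq_int (U : Finset α) (k : ℤ) :
    (U.powerset.filter fun Y => (Y.card : ℤ) = k).card
      = if 0 ≤ k then U.card.choose k.toNat else 0 := by
  split_ifs with hk
  · rw [← card_powersetCard, powersetCard_eq_filter]
    congr 1
    exact filter_congr fun Y _ => by omega
  · rw [card_eq_zero, filter_eq_empty_iff]
    intro Y _
    omega

section DecidableEq

variable [DecidableEq α]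

theorem card_symmDiff_of_subset_union {C₁ C₂ X : Finset α} (hdisj : Disjoint C₁ C₂)
    (hX : X ⊆ C₁ ∪ C₂) :
    ((X ∆ C₁).card : ℤ) = C₁.card + ((X ∩ C₂).card - (X ∩ C₁).card) := by
  have hX₂ : X \ C₁ = X ∩ C₂ := by
    ext a
    have := @hX a
    have : a ∈ C₁ → a ∉ C₂ := fun h => disjoint_left.mp hdisj h
    simp only [mem_sdiff, mem_inter, mem_union] at *
    tauto
  have hX₁ : (X ∩ C₁).card ≤ C₁.card := card_le_card inter_subset_right
  rw [Finset.symmDiff_def, card_union_of_disjoint disjoint_sdiff_sdiff, hX₂, card_sdiff]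
  push_cast [hX₁]
  ring

theorem card_filter_powerset_symmDiff {U A : Finset α} (hA : A ⊆ U) (p : Finset α → Prop)
    [DecidablePred p] :
    (U.powerset.filter p).card = (U.powerset.filter fun Y => p (Y ∆ A)).card := by
  have hsub : ∀ X ⊆ U, X ∆ A ⊆ U := fun X hX => symmDiff_subset_union.trans (union_subset hX hA)
  refine card_nbij' (· ∆ A) (· ∆ A) ?_ ?_ ?_ ?_
  · intro X hX
    simp only [mem_coe, mem_filter, mem_powerset] at hX ⊢
    exact ⟨hsub X hX.1, by rw [symmDiff_symmDiff_cancel_right]; exact hX.2⟩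
  · intro Y hY
    simp only [mem_coe, mem_filter, mem_powerset] at hY ⊢
    exact ⟨hsub Y hY.1, hY.2⟩
  · intro X _; exact symmDiff_symmDiff_cancel_right _ _
  · intro Y _; exact symmDiff_symmDiff_cancel_right _ _

end DecidableEq

end Finset

theorem Nat.choose_toNat_symm (m : ℕ) (k : ℤ) :
    (if 0 ≤ k then m.choose k.toNat else 0)
      = if 0 ≤ (m : ℤ) - k then m.choose ((m : ℤ) - k).toNat else 0 := by
  by_cases hk : 0 ≤ k
  · by_cases hkm : k ≤ m
    · rw [if_pos hk, if_pos (by omega), ← Nat.choose_symm (by omega)]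
      congr 1
      omega
    · rw [if_pos hk, if_neg (by omega), Nat.choose_eq_zero_of_lt (by omega)]
  · rw [if_neg hk, if_pos (by omega), Nat.choose_eq_zero_of_lt (by omega)]

open Finset in
/-- Let `C₁` and `C₂` be disjoint finite sets with `|C₁| = s` and `|C₂| = t`, and let
`i` be an integer.  Then the number of subsets `X ⊆ C₁ ∪ C₂` with
`(|X ∩ C₂| : ℤ) - (|X ∩ C₁| : ℤ) = i` equals the binomial coefficient `C(s + t, t - i)`,
interpreted as `0` when `t - i < 0` (and `Nat.choose` is already `0` when `t - i > s + t`). -/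
theorem card_subsets_with_diff {α : Type*} [DecidableEq α]
    (C₁ C₂ : Finset α) (hdisj : Disjoint C₁ C₂) (s t : ℕ)
    (hs : C₁.card = s) (ht : C₂.card = t) (i : ℤ) :
    ((C₁ ∪ C₂).powerset.filter
        (fun X => ((X ∩ C₂).card : ℤ) - ((X ∩ C₁).card : ℤ) = i)).card
      = if 0 ≤ (t : ℤ) - i then Nat.choose (s + t) ((t : ℤ) - i).toNat else 0 := by
  have hU : (C₁ ∪ C₂).card = s + t := by rw [card_union_of_disjoint hdisj, hs, ht]
  have hdiff : ∀ Y ⊆ C₁ ∪ C₂, ((Y ∆ C₁ ∩ C₂).card : ℤ) - (Y ∆ C₁ ∩ C₁).card = i ↔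
      (Y.card : ℤ) = s + i := by
    intro Y hY
    have := card_symmDiff_of_subset_union hdisj
      (symmDiff_subset_union.trans (union_subset hY subset_union_left))
    rw [symmDiff_symmDiff_cancel_right, hs] at this
    omega
  calc _ = ((C₁ ∪ C₂).powerset.filter fun Y => (Y.card : ℤ) = s + i).card := by
        rw [card_filter_powerset_symmDiff subset_union_left]
        exact congrArg card (filter_congr fun Y hY => hdiff Y (mem_powerset.mp hY))
    _ = _ := by
        rw [card_filter_powerset_card_eq_int, hU, Nat.choose_toNat_symm]
        simp only [Nat.cast_add, add_sub_add_left_eq_sub]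
end

section
/- Let A, B be disjoint finsets of a finite set S with Γ = A ∪ B, let (L, R) be a weighing on S, let C₁ = L \ Γ, C₂ = R \ Γ, m = |C₁| + |C₂|, and Λ = Γ ∪ L ∪ R. Then for every v ∈ {<, =, >}, the number of subsets X ⊆ Λ such that the outcome of (A, B) on X is v and |X ∩ L| = |X ∩ R| is at most C(m, ⌊m/2⌋) times the number of subsets Y ⊆ Γ such that the outcome of (A, B) on Y is v. -/
/-!
Restricting a set `X ⊆ Λ` to `Γ` preserves the outcome of `(A, B)`, so it suffices to bound each
fibre of `X ↦ X ∩ Γ` by `C(m, ⌊m/2⌋)`. On a fibre the part `Z = X \ Γ ⊆ C₁ ∪ C₂` determines `X`,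
and balance of `(L, R)` becomes `a + |Z ∩ C₁| = b + |Z ∩ C₂|` for constants `a, b`. Then
`Z ↦ Z ∆ C₂` is injective and has image of constant size `k`, so there are at most
`C(m, k) ≤ C(m, ⌊m/2⌋)` such `Z`.
-/

/-- The outcome of the weighing `(L, R)` on the set `X` of fake (heavier) coins:
the comparison sign obtained by comparing `|X ∩ L|` with `|X ∩ R|`. -/
def weighOutcome {α : Type*} [DecidableEq α] (L R X : Finset α) : Ordering :=
  compare (X ∩ L).card (X ∩ R).card

namespace Finset

open scoped symmDiff

variable {α : Type*} [DecidableEq α]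

lemma card_symmDiff_add_card_inter {C D Z : Finset α} (hCD : Disjoint C D)
    (hZ : Z ⊆ C ∪ D) : #(Z ∆ D) + #(Z ∩ D) = #(Z ∩ C) + #D := by
  have hZD : Z \ D = Z ∩ C := by
    ext x
    have := @hZ x
    have : x ∈ C → x ∉ D := fun h => disjoint_left.mp hCD h
    simp only [mem_sdiff, mem_inter, mem_union] at *
    tauto
  rw [symmDiff_def, sup_eq_union, card_union_of_disjoint disjoint_sdiff_sdiff, hZD,
    add_assoc, inter_comm Z D, card_sdiff_add_card_inter]

lemma card_filter_add_card_inter_eq_le_choose {C D : Finset α} (hCD : Disjoint C D) (a b : ℕ) :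
    #{Z ∈ (C ∪ D).powerset | a + #(Z ∩ C) = b + #(Z ∩ D)}
      ≤ (#C + #D).choose ((#C + #D) / 2) :=
  calc _ ≤ #((C ∪ D).powersetCard (b + #D - a)) := by
        refine card_le_card_of_injOn (· ∆ D) (fun Z hZ => ?_) (symmDiff_left_injective D).injOn
        rw [mem_coe, mem_filter, mem_powerset] at hZ
        have := card_symmDiff_add_card_inter hCD hZ.1
        rw [mem_coe, mem_powersetCard]
        exact ⟨symmDiff_le_sup.trans (union_subset hZ.1 subset_union_right), by dsimp only; omega⟩
    _ = (#C + #D).choose (b + #D - a) := by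
        rw [card_powersetCard, card_union_of_disjoint hCD]
    _ ≤ _ := Nat.choose_le_middle _ _

lemma card_inter_eq_card_inter_inter_add (X Γ L : Finset α) :
    #(X ∩ L) = #((X ∩ Γ) ∩ L) + #((X \ Γ) ∩ (L \ Γ)) := by
  have hout : (X ∩ L) \ Γ = (X \ Γ) ∩ (L \ Γ) := by ext; simp only [mem_sdiff, mem_inter]; tauto
  rw [inter_right_comm, ← hout, card_inter_add_card_sdiff]

lemma card_balanced_fiber_le {Γ L R : Finset α} (hLR : Disjoint L R) (Y : Finset α) :
    #{X ∈ (Γ ∪ L ∪ R).powerset | #(X ∩ L) = #(X ∩ R) ∧ X ∩ Γ = Y}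
      ≤ (#(L \ Γ) + #(R \ Γ)).choose ((#(L \ Γ) + #(R \ Γ)) / 2) := by
  refine le_trans ?_ <| card_filter_add_card_inter_eq_le_choose
    (hLR.mono sdiff_subset sdiff_subset) #(Y ∩ L) #(Y ∩ R)
  refine card_le_card_of_injOn (· \ Γ) (fun X hX => ?_) (fun X hX X' hX' h => ?_)
  · simp only [mem_coe, mem_filter, mem_powerset] at hX ⊢
    obtain ⟨hXΛ, hbal, rfl⟩ := hX
    refine ⟨fun x hx => ?_, ?_⟩
    · have := @hXΛ x
      simp only [mem_sdiff, mem_union] at hx this ⊢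
      tauto
    · rwa [card_inter_eq_card_inter_inter_add X Γ L, card_inter_eq_card_inter_inter_add X Γ R]
        at hbal
  · rw [mem_coe, mem_filter] at hX hX'
    rw [← sdiff_union_inter X Γ, ← sdiff_union_inter X' Γ, hX.2.2, hX'.2.2]
    exact congrArg (· ∪ Y) h

end Finset

lemma weighOutcome_inter_of_subset {α : Type*} [DecidableEq α] {A B Γ : Finset α}
    (hA : A ⊆ Γ) (hB : B ⊆ Γ) (X : Finset α) :
    weighOutcome A B (X ∩ Γ) = weighOutcome A B X := by
  simp only [weighOutcome, Finset.inter_assoc, Finset.inter_eq_right.mpr hA,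
    Finset.inter_eq_right.mpr hB]

theorem card_balanced_le_choose_mul_general {α : Type*} [DecidableEq α]
    (A B L R : Finset α)
    (hLR : Disjoint L R)
    (Γ C₁ C₂ Λ : Finset α) (m : ℕ)
    (hΓ : Γ = A ∪ B) (hC₁ : C₁ = L \ Γ) (hC₂ : C₂ = R \ Γ)
    (hm : m = C₁.card + C₂.card) (hΛ : Λ = Γ ∪ L ∪ R) (v : Ordering) :
    (Λ.powerset.filter
        (fun X => weighOutcome A B X = v ∧ (X ∩ L).card = (X ∩ R).card)).card
      ≤ Nat.choose m (m / 2) *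
        (Γ.powerset.filter (fun Y => weighOutcome A B Y = v)).card := by
  subst hC₁ hC₂ hm hΛ
  have hA : A ⊆ Γ := hΓ ▸ Finset.subset_union_left
  have hB : B ⊆ Γ := hΓ ▸ Finset.subset_union_right
  refine Finset.card_le_mul_card_image_of_maps_to (f := (· ∩ Γ)) (fun X hX => ?_) _
    fun Y _ => (Finset.card_le_card fun X hX => ?_).trans (Finset.card_balanced_fiber_le hLR Y)
  · simp only [Finset.mem_filter, Finset.mem_powerset] at hX ⊢
    exact ⟨Finset.inter_subset_right, (weighOutcome_inter_of_subset hA hB X).trans hX.2.1⟩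
  · simp only [Finset.mem_filter] at hX ⊢
    exact ⟨hX.1.1, hX.1.2.2, hX.2⟩

/-- Let `A, B` be disjoint finsets of a finite set `S` with `Γ = A ∪ B`, let `(L, R)` be a
weighing on `S`, `C₁ = L \ Γ`, `C₂ = R \ Γ`, `m = |C₁| + |C₂|`, and `Λ = Γ ∪ L ∪ R`.
Then for every `v ∈ {<, =, >}`, the number of subsets `X ⊆ Λ` whose outcome under `(A, B)`
is `v` and with `|X ∩ L| = |X ∩ R|` is at most `C(m, ⌊m/2⌋)` times the number of subsets
`Y ⊆ Γ` whose outcome under `(A, B)` is `v`. -/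
theorem card_balanced_le_choose_mul {α : Type*} [DecidableEq α]
    (S A B L R : Finset α)
    (hA : A ⊆ S) (hB : B ⊆ S) (hAB : Disjoint A B)
    (hL : L ⊆ S) (hR : R ⊆ S) (hLR : Disjoint L R)
    (Γ C₁ C₂ Λ : Finset α) (m : ℕ)
    (hΓ : Γ = A ∪ B) (hC₁ : C₁ = L \ Γ) (hC₂ : C₂ = R \ Γ)
    (hm : m = C₁.card + C₂.card) (hΛ : Λ = Γ ∪ L ∪ R) (v : Ordering) :
    (Λ.powerset.filter
        (fun X => weighOutcome A B X = v ∧ (X ∩ L).card = (X ∩ R).card)).card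
      ≤ Nat.choose m (m / 2) *
        (Γ.powerset.filter (fun Y => weighOutcome A B Y = v)).card :=
  card_balanced_le_choose_mul_general A B L R hLR Γ C₁ C₂ Λ m hΓ hC₁ hC₂ hm hΛ v
end

section
/- Let A, B be disjoint finsets with Γ = A ∪ B, and for v ∈ {<, =, >} let N_v denote the number of subsets X ⊆ Γ whose outcome under the weighing (A, B) is v. Then max{N_<, N_=, N_>} is at least 1 if |Γ| = 1, at least 2 if |Γ| = 2, and at least 4 if |Γ| = 3. -/
/-! The three counts sum to `2 ^ |Γ|`, which settles `|Γ| ≤ 2`. For `|Γ| = 3` disjointness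
forces `|A| ≠ |B|`, say `|A| < |B|`. Passing to the complement `Γ \ X` replaces
`(|X ∩ A|, |X ∩ B|)` by `(|A| - |X ∩ A|, |B| - |X ∩ B|)`, so of `X` and `Γ \ X` at least one
tips towards `B`; hence at least half of the `8` subsets give the outcome `<`. -/

open Finset

section

variable {α : Type*} [DecidableEq α]

def outcomeCount (L R : Finset α) (v : Ordering) : ℕ :=
  #{X ∈ (L ∪ R).powerset | weighOutcome L R X = v}

theorem weighOutcome_swap (L R X : Finset α) :
    weighOutcome R L X = (weighOutcome L R X).swap :=
  Std.OrientedOrd.eq_swap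

theorem outcomeCount_swap (L R : Finset α) (v : Ordering) :
    outcomeCount R L v = outcomeCount L R v.swap := by
  rw [outcomeCount, outcomeCount, union_comm]
  congr! 2 with X
  rw [weighOutcome_swap, Ordering.swap_eq_iff_eq_swap]

theorem outcomeCount_lt_add_eq_add_gt (L R : Finset α) :
    outcomeCount L R .lt + outcomeCount L R .eq + outcomeCount L R .gt = 2 ^ #(L ∪ R) := by
  rw [← card_powerset, card_eq_sum_card_fiberwise (f := weighOutcome L R) (fun _ _ => mem_univ _),
    show (univ : Finset Ordering) = {.lt, .eq, .gt} by decide, sum_insert (by decide),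
    sum_insert (by decide), sum_singleton, add_assoc]
  rfl

theorem weighOutcome_sdiff_eq_lt {L R X : Finset α} (h : #L < #R)
    (hX : weighOutcome L R X ≠ .lt) : weighOutcome L R ((L ∪ R) \ X) = .lt := by
  have hL : (L ∪ R) \ X ∩ L = L \ X := by ext; simp; tauto
  have hR : (L ∪ R) \ X ∩ R = R \ X := by ext; simp; tauto
  have hXL := card_le_card (inter_subset_right : X ∩ L ⊆ L)
  have hXR := card_le_card (inter_subset_right : X ∩ R ⊆ R)
  simp only [weighOutcome, ne_eq, Nat.compare_eq_lt, hL, hR, card_sdiff] at hX ⊢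
  omega

theorem two_pow_card_le_two_mul_outcomeCount_lt {L R : Finset α} (h : #L < #R) :
    2 ^ #(L ∪ R) ≤ 2 * outcomeCount L R .lt := by
  have hsplit := card_filter_add_card_filter_not (s := (L ∪ R).powerset)
    (fun X => weighOutcome L R X = .lt)
  have hcompl : #{X ∈ (L ∪ R).powerset | ¬weighOutcome L R X = .lt} ≤ outcomeCount L R .lt := by
    refine card_le_card_of_injOn (fun X => (L ∪ R) \ X) (fun X hX => ?_) (fun X hX Y hY hXY => ?_)
    · obtain ⟨-, hX⟩ := mem_filter.1 (mem_coe.1 hX)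
      exact mem_coe.2 (mem_filter.2 ⟨mem_powerset.2 sdiff_subset, weighOutcome_sdiff_eq_lt h hX⟩)
    · rw [← Finset.sdiff_sdiff_eq_self (mem_powerset.1 (mem_filter.1 (mem_coe.1 hX)).1),
        ← Finset.sdiff_sdiff_eq_self (mem_powerset.1 (mem_filter.1 (mem_coe.1 hY)).1)]
      exact congrArg _ hXY
  rw [card_powerset] at hsplit
  unfold outcomeCount at hcompl ⊢
  omega

theorem two_pow_card_le_two_mul_outcomeCount_gt {L R : Finset α} (h : #R < #L) :
    2 ^ #(L ∪ R) ≤ 2 * outcomeCount L R .gt := by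
  rw [← Ordering.swap_lt, ← outcomeCount_swap, union_comm]
  exact two_pow_card_le_two_mul_outcomeCount_lt h

end

/-- Let `A, B` be disjoint finsets with `Γ = A ∪ B`, and for `v ∈ {<, =, >}` let `N v` be
the number of subsets `X ⊆ Γ` whose outcome under the weighing `(A, B)` is `v`.  Then
`max {N <, N =, N >}` is at least `1` if `|Γ| = 1`, at least `2` if `|Γ| = 2`, and at
least `4` if `|Γ| = 3`. -/
theorem max_outcome_count_small {α : Type*} [DecidableEq α]
    (A B : Finset α) (hAB : Disjoint A B) (Γ : Finset α) (hΓ : Γ = A ∪ B)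
    (N : Ordering → ℕ)
    (hN : ∀ v, N v = (Γ.powerset.filter (fun X => weighOutcome A B X = v)).card) :
    (Γ.card = 1 → 1 ≤ max (max (N .lt) (N .eq)) (N .gt)) ∧
    (Γ.card = 2 → 2 ≤ max (max (N .lt) (N .eq)) (N .gt)) ∧
    (Γ.card = 3 → 4 ≤ max (max (N .lt) (N .eq)) (N .gt)) := by
  subst hΓ
  obtain rfl : N = outcomeCount A B := funext hN
  have hsum := outcomeCount_lt_add_eq_add_gt A B
  refine ⟨fun h1 => by rw [h1] at hsum; omega, fun h2 => by rw [h2] at hsum; omega, fun h3 => ?_⟩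
  have hAB3 : #A + #B = 3 := by rw [← card_union_of_disjoint hAB, h3]
  rcases lt_or_gt_of_ne (show #A ≠ #B by omega) with hlt | hgt
  · have := two_pow_card_le_two_mul_outcomeCount_lt hlt
    rw [h3] at this
    omega
  · have := two_pow_card_le_two_mul_outcomeCount_gt hgt
    rw [h3] at this
    omega
end

section
/- Let A, B be disjoint nonempty finsets with Γ = A ∪ B and |Γ| ≥ 6, and for v ∈ {<, =, >} let N_v denote the number of subsets X ⊆ Γ whose outcome under the weighing (A, B) is v. Then 2 · max{N_<, N_>} ≥ 2^{|Γ|} − C(|Γ|, ⌈|Γ|/2⌉). -/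
section

open Finset
open scoped symmDiff

theorem Finset.card_symmDiff_add_two_mul_card_inter {α : Type*} [DecidableEq α]
    (s t : Finset α) : #(s ∆ t) + 2 * #(s ∩ t) = #s + #t := by
  rw [symmDiff_eq_sup_sdiff_inf, sup_eq_union, inf_eq_inter,
    card_sdiff_of_subset inter_subset_union, ← card_union_add_card_inter s t]
  have := card_le_card (inter_subset_union (s := s) (t := t))
  omega

theorem Finset.card_filter_lt_add_eq_add_gt {β : Type*} (s : Finset β) (f : β → Ordering) :
    #(s.filter (f · = .lt)) + #(s.filter (f · = .eq)) + #(s.filter (f · = .gt)) = #s := by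
  rw [card_eq_sum_card_fiberwise (s := s) (t := ({.lt, .eq, .gt} : Finset Ordering)) (f := f)
    (fun x _ => by cases f x <;> simp)]
  simp [add_assoc]

theorem Nat.choose_le_choose_half_ceil (n k : ℕ) : n.choose k ≤ n.choose ((n + 1) / 2) := by
  refine (Nat.choose_le_middle k n).trans_eq ?_
  rw [show n / 2 = n - (n + 1) / 2 by omega, Nat.choose_symm (by omega)]

variable {α : Type*} [DecidableEq α] {A B : Finset α}

theorem card_symmDiff_eq_of_weighOutcome_eq (hAB : Disjoint A B) {X : Finset α}
    (hX : X ⊆ A ∪ B) (hXeq : weighOutcome A B X = .eq) : #(X ∆ A) = #A := by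
  have hbal : #(X ∩ A) = #(X ∩ B) := compare_eq_iff_eq.mp hXeq
  have hsplit : #X = #(X ∩ A) + #(X ∩ B) := by
    rw [← card_union_of_disjoint (hAB.mono inter_subset_right inter_subset_right),
      ← inter_union_distrib_left, inter_eq_left.mpr hX]
  have := card_symmDiff_add_two_mul_card_inter X A
  omega

theorem card_filter_weighOutcome_eq_le_choose (hAB : Disjoint A B) :
    #((A ∪ B).powerset.filter (weighOutcome A B · = .eq)) ≤ (#(A ∪ B)).choose #A := by
  rw [← card_powersetCard]
  refine card_le_card_of_injOn (· ∆ A) (fun X hX => ?_) (symmDiff_left_injective A).injOn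
  simp only [coe_filter, mem_powerset, Set.mem_ofPred_eq] at hX
  rw [mem_coe, mem_powersetCard]
  exact ⟨symmDiff_le_sup.trans (union_subset hX.1 subset_union_left),
    card_symmDiff_eq_of_weighOutcome_eq hAB hX.1 hX.2⟩

end

theorem max_outcome_count_large_general {α : Type*} [DecidableEq α]
    (A B : Finset α) (hAB : Disjoint A B)
    (Γ : Finset α) (hΓ : Γ = A ∪ B)
    (N : Ordering → ℕ)
    (hN : ∀ v, N v = (Γ.powerset.filter (fun X => weighOutcome A B X = v)).card) :
    2 ^ Γ.card - Nat.choose Γ.card ((Γ.card + 1) / 2) ≤ 2 * max (N .lt) (N .gt) := by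
  subst hΓ
  have htotal := Finset.card_filter_lt_add_eq_add_gt (A ∪ B).powerset (weighOutcome A B)
  have hbalanced := card_filter_weighOutcome_eq_le_choose hAB
  have hmiddle := Nat.choose_le_choose_half_ceil (A ∪ B).card A.card
  rw [Finset.card_powerset] at htotal
  rw [hN, hN]
  omega

/-- Let `A, B` be disjoint nonempty finsets with `Γ = A ∪ B` and `|Γ| ≥ 6`, and for
`v ∈ {<, =, >}` let `N v` be the number of subsets `X ⊆ Γ` whose outcome under the
weighing `(A, B)` is `v`.  Then `2 * max {N <, N >} ≥ 2 ^ |Γ| - C(|Γ|, ⌈|Γ|/2⌉)`. -/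
theorem max_outcome_count_large {α : Type*} [DecidableEq α]
    (A B : Finset α) (hAB : Disjoint A B) (hA : A.Nonempty) (hB : B.Nonempty)
    (Γ : Finset α) (hΓ : Γ = A ∪ B) (hcard : 6 ≤ Γ.card)
    (N : Ordering → ℕ)
    (hN : ∀ v, N v = (Γ.powerset.filter (fun X => weighOutcome A B X = v)).card) :
    2 ^ Γ.card - Nat.choose Γ.card ((Γ.card + 1) / 2) ≤ 2 * max (N .lt) (N .gt) :=
  max_outcome_count_large_general A B hAB Γ hΓ N hN
end

section
/- Let A, B be disjoint finsets of a finite set S with |A| = |B| = 2, let Γ = A ∪ B, let (L, R) be a weighing on S with |(L ∪ R) \ Γ| ≤ 4, and let Λ = Γ ∪ L ∪ R. Then there exists v ∈ {<, =, >} such that 8 times the number of subsets X ⊆ Λ with |X ∩ A| = |X ∩ B| and with outcome of (L, R) on X equal to v is at least 2^{|Λ|}. -/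
/-!
Call `X` balanced if `|X ∩ A| = |X ∩ B|`. A subset `X ⊆ Λ` is balanced iff `X ∩ (A ∪ B)`
is, and of the 16 subsets of `A ∪ B` exactly `∑ₖ C(2,k)² = 6` are balanced, so `6/16` of all
subsets of `Λ` are balanced. Splitting these by the three outcomes of the weighing, some
outcome receives at least `2/16 = 1/8` of all subsets.
-/

open Finset

namespace Finset

variable {α : Type*} [DecidableEq α]

lemma union_inter_left_of_disjoint {s t Y Z : Finset α} (hst : Disjoint s t) (hY : Y ⊆ s)
    (hZ : Z ⊆ t) : (Y ∪ Z) ∩ s = Y := by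
  rw [union_inter_distrib_right, inter_eq_left.2 hY,
    disjoint_iff_inter_eq_empty.1 (hst.symm.mono_left hZ), union_empty]

lemma card_filter_powerset_union {s t : Finset α} (hst : Disjoint s t)
    (p : Finset α → Finset α → Prop) [∀ Y Z, Decidable (p Y Z)] :
    #{X ∈ (s ∪ t).powerset | p (X ∩ s) (X ∩ t)} =
      #{q ∈ s.powerset ×ˢ t.powerset | p q.1 q.2} := by
  have hs {Y Z} (hY : Y ⊆ s) (hZ : Z ⊆ t) : (Y ∪ Z) ∩ s = Y :=
    union_inter_left_of_disjoint hst hY hZ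
  have ht {Y Z} (hY : Y ⊆ s) (hZ : Z ⊆ t) : (Y ∪ Z) ∩ t = Z := by
    rw [union_comm]; exact union_inter_left_of_disjoint hst.symm hZ hY
  refine card_nbij' (fun X => (X ∩ s, X ∩ t)) (fun q => q.1 ∪ q.2) ?_ ?_ ?_ ?_
  · intro X hX
    simp only [coe_filter, mem_powerset, Set.mem_ofPred_eq, mem_product] at hX ⊢
    exact ⟨⟨inter_subset_right, inter_subset_right⟩, hX.2⟩
  · rintro ⟨Y, Z⟩ hq
    simp only [coe_filter, mem_powerset, Set.mem_ofPred_eq, mem_product] at hq ⊢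
    obtain ⟨⟨hY, hZ⟩, hp⟩ := hq
    exact ⟨union_subset_union hY hZ, by rwa [hs hY hZ, ht hY hZ]⟩
  · intro X hX
    simp only [coe_filter, mem_powerset, Set.mem_ofPred_eq] at hX
    simp only [← inter_union_distrib_left, inter_eq_left.2 hX.1]
  · rintro ⟨Y, Z⟩ hq
    simp only [coe_filter, mem_powerset, Set.mem_ofPred_eq, mem_product] at hq
    simp only [hs hq.1.1 hq.1.2, ht hq.1.1 hq.1.2]

lemma card_filter_powerset_inter_of_subset {s t : Finset α} (hst : s ⊆ t)
    (p : Finset α → Prop) [DecidablePred p] :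
    #{X ∈ t.powerset | p (X ∩ s)} = #{Y ∈ s.powerset | p Y} * 2 ^ (#t - #s) := by
  conv_lhs => rw [← union_sdiff_of_subset hst]
  rw [card_filter_powerset_union disjoint_sdiff (fun Y _ => p Y), filter_product_left,
    card_product, card_powerset, card_sdiff_of_subset hst]

lemma card_filter_powerset_card_inter_eq {A B : Finset α} (hAB : Disjoint A B) :
    #{X ∈ (A ∪ B).powerset | #(X ∩ A) = #(X ∩ B)} =
      ∑ k ∈ range (#A + 1), (#A).choose k * (#B).choose k := by
  rw [card_filter_powerset_union hAB (fun Y Z => #Y = #Z), card_filter, sum_product,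
    sum_powerset]
  refine sum_congr rfl fun k _ => ?_
  dsimp only
  have hfiber {Y : Finset α} (hY : #Y = k) :
      ∑ Z ∈ B.powerset, (if #Y = #Z then 1 else 0) = (#B).choose k := by
    rw [← card_filter, ← card_powersetCard, powersetCard_eq_filter]
    simp_rw [hY, eq_comm]
  rw [sum_congr rfl fun Y hY => hfiber (mem_powersetCard.1 hY).2, sum_const, card_powersetCard,
    smul_eq_mul]

lemma card_filter_powerset_card_inter_eq_of_subset {A B t : Finset α} (hAB : Disjoint A B)
    (hA : A ⊆ t) (hB : B ⊆ t) :
    #{X ∈ t.powerset | #(X ∩ A) = #(X ∩ B)} =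
      (∑ k ∈ range (#A + 1), (#A).choose k * (#B).choose k) * 2 ^ (#t - (#A + #B)) := by
  have hfilter : {X ∈ t.powerset | #(X ∩ A) = #(X ∩ B)} =
      {X ∈ t.powerset | #(X ∩ (A ∪ B) ∩ A) = #(X ∩ (A ∪ B) ∩ B)} :=
    filter_congr fun X _ => by
      rw [inter_assoc, inter_assoc, inter_eq_right.2 subset_union_left,
        inter_eq_right.2 subset_union_right]
  rw [hfilter,
    card_filter_powerset_inter_of_subset (union_subset hA hB) (fun Y => #(Y ∩ A) = #(Y ∩ B)),
    card_filter_powerset_card_inter_eq hAB, card_union_of_disjoint hAB]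

end Finset

theorem case_two_two_general {α : Type*} [DecidableEq α]
    (A B L R : Finset α)
    (hAB : Disjoint A B)
    (hcardA : A.card = 2) (hcardB : B.card = 2)
    (Γ Λ : Finset α) (hΓ : Γ = A ∪ B) (hΛ : Λ = Γ ∪ L ∪ R) :
    ∃ v : Ordering,
      2 ^ Λ.card ≤ 8 * (Λ.powerset.filter
        (fun X => (X ∩ A).card = (X ∩ B).card ∧ weighOutcome L R X = v)).card := by
  have hΓΛ : A ∪ B ⊆ Λ := hΓ ▸ hΛ ▸ subset_union_left.trans subset_union_left
  have hbalanced : #{X ∈ Λ.powerset | #(X ∩ A) = #(X ∩ B)} = 6 * 2 ^ (#Λ - 4) := by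
    have h := card_filter_powerset_card_inter_eq_of_subset hAB
      (subset_union_left.trans hΓΛ) (subset_union_right.trans hΓΛ)
    norm_num [hcardA, hcardB, sum_range_succ] at h
    exact h
  have hcardΛ : 4 ≤ #Λ := by
    simpa [card_union_of_disjoint hAB, hcardA, hcardB] using card_le_card hΓΛ
  obtain ⟨v, -, hv⟩ := exists_le_card_fiber_of_mul_le_card_of_maps_to
    (f := weighOutcome L R) (n := 2 * 2 ^ (#Λ - 4)) (fun _ _ => mem_univ _) univ_nonempty
    (by rw [hbalanced, card_univ, show Fintype.card Ordering = 3 from rfl]; omega)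
  refine ⟨v, ?_⟩
  rw [← filter_filter]
  calc 2 ^ #Λ = 8 * (2 * 2 ^ (#Λ - 4)) := by
        rw [← pow_sub_mul_pow 2 hcardΛ]; ring
    _ ≤ _ := Nat.mul_le_mul_left 8 hv

/-- Let `A, B` be disjoint finsets of a finite set `S` with `|A| = |B| = 2`, `Γ = A ∪ B`,
let `(L, R)` be a weighing on `S` with `|(L ∪ R) \ Γ| ≤ 4`, and `Λ = Γ ∪ L ∪ R`.  Then
there is `v ∈ {<, =, >}` such that `8` times the number of subsets `X ⊆ Λ` with
`|X ∩ A| = |X ∩ B|` and outcome of `(L, R)` on `X` equal to `v` is at least `2 ^ |Λ|`. -/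
theorem case_two_two {α : Type*} [DecidableEq α]
    (S A B L R : Finset α)
    (hA : A ⊆ S) (hB : B ⊆ S) (hAB : Disjoint A B)
    (hcardA : A.card = 2) (hcardB : B.card = 2)
    (hL : L ⊆ S) (hR : R ⊆ S) (hLR : Disjoint L R)
    (Γ Λ : Finset α) (hΓ : Γ = A ∪ B) (hΛ : Λ = Γ ∪ L ∪ R)
    (hnew : ((L ∪ R) \ Γ).card ≤ 4) :
    ∃ v : Ordering,
      2 ^ Λ.card ≤ 8 * (Λ.powerset.filter
        (fun X => (X ∩ A).card = (X ∩ B).card ∧ weighOutcome L R X = v)).card :=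
  case_two_two_general A B L R hAB hcardA hcardB Γ Λ hΓ hΛ
end

section
/- Let S be a finite set with |S| = n, and let (A₁, B₁), (A₂, B₂), (A₃, B₃) be any three weighings on S. Then there exist v₁, v₂, v₃ ∈ {<, =, >} such that 2^7 times the number of subsets X ⊆ S whose outcome under (A_i, B_i) is v_i for each i = 1, 2, 3 is at least 5 · 2^n. -/
open Finset

namespace Weighing

variable {α : Type*} [DecidableEq α]

theorem card_powerset_filter_eq_sum_choose {S P : Finset α} (hP : P ⊆ S)
    (H : ℕ → Finset α → Prop) [∀ k Y, Decidable (H k Y)] :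
    #{X ∈ S.powerset | H #(X ∩ P) (X \ P)} =
      ∑ k ∈ range (#P + 1), (#P).choose k * #{Y ∈ (S \ P).powerset | H k Y} := by
  have hsplit : ∀ Z ⊆ P, ∀ Y ⊆ S \ P, (Z ∪ Y) ∩ P = Z ∧ (Z ∪ Y) \ P = Y := by
    intro Z hZ Y hY
    have hYP : Disjoint Y P := disjoint_of_subset_left hY sdiff_disjoint
    rw [union_inter_distrib_right, inter_eq_left.2 hZ, disjoint_iff_inter_eq_empty.1 hYP,
      union_empty, union_sdiff_distrib, sdiff_eq_empty_iff_subset.2 hZ, empty_union,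
      sdiff_eq_self_of_disjoint hYP]
    exact ⟨rfl, rfl⟩
  have hprod : #{X ∈ S.powerset | H #(X ∩ P) (X \ P)} =
      #{ZY ∈ P.powerset ×ˢ (S \ P).powerset | H #ZY.1 ZY.2} := by
    refine card_nbij' (fun X => (X ∩ P, X \ P)) (fun ZY => ZY.1 ∪ ZY.2) ?_ ?_
      (fun X _ => sup_inf_sdiff X P) ?_
    · intro X hX
      simp only [coe_filter, mem_powerset, Set.mem_ofPred_eq, mem_product] at hX ⊢
      exact ⟨⟨inter_subset_right, sdiff_subset_sdiff hX.1 le_rfl⟩, hX.2⟩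
    · rintro ⟨Z, Y⟩ hZY
      simp only [coe_filter, mem_powerset, Set.mem_ofPred_eq, mem_product] at hZY
      obtain ⟨⟨hZ, hY⟩, hH⟩ := hZY
      simp only [coe_filter, mem_powerset, Set.mem_ofPred_eq, hsplit Z hZ Y hY]
      exact ⟨union_subset (hZ.trans hP) (hY.trans sdiff_subset), hH⟩
    · rintro ⟨Z, Y⟩ hZY
      simp only [coe_filter, mem_powerset, Set.mem_ofPred_eq, mem_product] at hZY
      simp only [hsplit Z hZY.1.1 Y hZY.1.2]
  calc _ = ∑ Z ∈ P.powerset, #{Y ∈ (S \ P).powerset | H #Z Y} := by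
        rw [hprod, card_filter, sum_product]
        simp only [card_filter]
    _ = _ := by
        simpa only [smul_eq_mul] using
          sum_powerset_apply_card (fun k => #{Y ∈ (S \ P).powerset | H k Y})

/-- `profileCount q p = ∑ ∏ⱼ (pⱼ.choose kⱼ)`, summed over the lists `k ≤ p` (entrywise) with
`q k`. -/
def profileCount (q : List ℕ → Bool) : List ℕ → ℕ
  | [] => if q [] then 1 else 0
  | p :: ps => ∑ k ∈ range (p + 1), p.choose k * profileCount (fun l => q (k :: l)) ps

theorem two_pow_sum_mul_card_powerset_filter_profile {κ : Type*} [DecidableEq κ] (τ : α → κ)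
    (cs : List κ) (hcs : cs.Nodup) (S : Finset α) (q : List ℕ → Bool) :
    2 ^ (cs.map fun c => #{x ∈ S | τ x = c}).sum *
        #{X ∈ S.powerset | q (cs.map fun c => #{x ∈ X | τ x = c})} =
      2 ^ #S * profileCount q (cs.map fun c => #{x ∈ S | τ x = c}) := by
  induction cs generalizing S q with
  | nil => by_cases hq : q [] <;> simp [profileCount, hq, card_powerset]
  | cons c cs ih =>
    obtain ⟨hc, hcs⟩ := List.nodup_cons.1 hcs
    set P := {x ∈ S | τ x = c}
    have hP : P ⊆ S := filter_subset _ _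
    have hfirst : ∀ X ⊆ S, {x ∈ X | τ x = c} = X ∩ P := by
      intro X hX
      rw [inter_filter, inter_eq_left.2 hX]
    have hrest : ∀ Y, ∀ c' ∈ cs, {x ∈ Y \ P | τ x = c'} = {x ∈ Y | τ x = c'} := by
      intro Y c' hc'
      ext x
      simp only [mem_filter, mem_sdiff, P]
      constructor
      · exact fun h => ⟨h.1.1, h.2⟩
      · exact fun h => ⟨⟨h.1, fun h' => hc (h'.2 ▸ h.2 ▸ hc')⟩, h.2⟩
    have hsplit :
        #{X ∈ S.powerset | q (#{x ∈ X | τ x = c} :: cs.map fun c' => #{x ∈ X | τ x = c'})} =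
          ∑ k ∈ range (#P + 1), (#P).choose k *
            #{Y ∈ (S \ P).powerset | q (k :: cs.map fun c' => #{x ∈ Y | τ x = c'})} := by
      rw [← card_powerset_filter_eq_sum_choose hP]
      refine congrArg card (filter_congr fun X hX => ?_)
      rw [hfirst X (mem_powerset.1 hX),
        List.map_congr_left fun c' hc' => congrArg card (hrest X c' hc')]
    have hS : 2 ^ #S = 2 ^ #P * 2 ^ #(S \ P) := by
      rw [← pow_add, add_comm, card_sdiff_add_card_eq_card hP]
    simp only [List.map_cons, List.sum_cons, profileCount]
    rw [hsplit, mul_sum, mul_sum]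
    refine sum_congr rfl fun k _ => ?_
    have hk := ih hcs (S \ P) (fun l => q (k :: l))
    rw [List.map_congr_left fun c' hc' => congrArg card (hrest S c' hc')] at hk
    rw [hS, pow_add, mul_mul_mul_comm, hk]
    ring

theorem exists_card_le_card_mul_card_fiber {β γ : Type*} [DecidableEq γ] {s : Finset β}
    {t : Finset γ} {f : β → γ} (hf : ∀ x ∈ s, f x ∈ t) (ht : t.Nonempty) :
    ∃ y ∈ t, #s ≤ #t * #{x ∈ s | f x = y} := by
  have hpos : (0 : ℚ) < #t := by exact_mod_cast ht.card_pos
  obtain ⟨y, hy, h⟩ := exists_le_card_fiber_of_nsmul_le_card_of_maps_to (b := (#s / #t : ℚ))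
    hf ht (by rw [nsmul_eq_mul, mul_div_cancel₀ _ hpos.ne'])
  refine ⟨y, hy, ?_⟩
  rw [div_le_iff₀ hpos] at h
  exact_mod_cast (mul_comm (#t : ℚ) _ ▸ h)

theorem exists_card_filter_le_mul_card_filter {ι β γ : Type*} [Fintype ι] [DecidableEq ι]
    [Fintype γ] [DecidableEq γ] (s : Finset β) (F : β → ι → γ) (J : Finset ι) (u : ι → γ) :
    ∃ v : ι → γ, #{x ∈ s | ∀ j ∈ J, F x j = u j} ≤
      Fintype.card γ ^ #Jᶜ * #{x ∈ s | ∀ i, F x i = v i} := by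
  set t := Fintype.piFinset fun i => if i ∈ J then {u i} else univ
  have hmem : ∀ w : ι → γ, w ∈ t ↔ ∀ j ∈ J, w j = u j := by
    intro w
    simp only [t, Fintype.mem_piFinset]
    refine forall_congr' fun i => ?_
    split_ifs <;> simp [*]
  have hcard : #t = Fintype.card γ ^ #Jᶜ := by
    simp only [t, Fintype.card_piFinset, apply_ite card, card_singleton, card_univ, prod_ite,
      prod_const_one, one_mul, prod_const, filter_not, filter_mem_eq_inter, univ_inter,
      compl_eq_univ_sdiff]
  obtain ⟨v, -, hv⟩ := exists_card_le_card_mul_card_fiber (f := F)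
    (fun x hx => (hmem (F x)).2 (mem_filter.1 hx).2) ⟨u, (hmem u).2 fun _ _ => rfl⟩
  refine ⟨v, hv.trans ?_⟩
  rw [hcard]
  gcongr
  intro x hx
  simp only [mem_filter] at hx ⊢
  exact ⟨hx.1.1, fun i => congrFun hx.2 i⟩

theorem sum_choose_filter_reflect (m : ℕ) (p : ℕ → Prop) [DecidablePred p] :
    ∑ k ∈ range (m + 1) with p k, m.choose k =
      ∑ k ∈ range (m + 1) with p (m - k), m.choose k := by
  rw [sum_filter, sum_filter, ← sum_range_reflect]
  refine sum_congr rfl fun k hk => ?_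
  rw [Nat.add_sub_cancel, Nat.choose_symm (Nat.lt_succ_iff.1 (mem_range.1 hk))]

theorem two_pow_le_two_mul_sum_choose_filter {m : ℕ} (p : ℕ → Prop) [DecidablePred p]
    (hp : ∀ k ≤ m, ¬p k → p (m - k)) :
    2 ^ m ≤ 2 * ∑ k ∈ range (m + 1) with p k, m.choose k := by
  have hnot : ∑ k ∈ range (m + 1) with ¬p k, m.choose k ≤
      ∑ k ∈ range (m + 1) with p k, m.choose k := by
    rw [sum_choose_filter_reflect]
    refine sum_le_sum_of_subset (monotone_filter_right _ fun k hk hpk => ?_)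
    simpa [Nat.sub_sub_self (Nat.lt_succ_iff.1 (mem_range.1 hk))] using
      hp (m - k) (Nat.sub_le m k) hpk
  rw [← Nat.sum_range_choose, ← sum_filter_add_sum_filter_not _ p]
  omega

theorem centralBinom_mul_four_pow_le {m n : ℕ} (h : m ≤ n) :
    n.centralBinom * 4 ^ m ≤ m.centralBinom * 4 ^ n := by
  induction n, h using Nat.le_induction with
  | base => rfl
  | succ n _ ih =>
    have hstep : (n + 1) * (n + 1).centralBinom ≤ (n + 1) * (4 * n.centralBinom) := by
      rw [Nat.succ_mul_centralBinom_succ]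
      nlinarith
    calc (n + 1).centralBinom * 4 ^ m ≤ 4 * n.centralBinom * 4 ^ m := by
          gcongr; exact Nat.le_of_mul_le_mul_left hstep n.succ_pos
      _ ≤ 4 * (m.centralBinom * 4 ^ n) := by rw [mul_assoc]; gcongr
      _ = m.centralBinom * 4 ^ (n + 1) := by ring

theorem exists_compare_sum_choose_ge_of_eq {b : ℕ} (hb : b ≠ 3) :
    ∃ o : Ordering, 45 * 2 ^ (b + b) ≤
      128 * ∑ k ∈ range (b + b + 1) with compare k b = o, (b + b).choose k := by
  set m := b + b
  have hLG : ∑ k ∈ range (m + 1) with compare k b = .lt, m.choose k =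
      ∑ k ∈ range (m + 1) with compare k b = .gt, m.choose k := by
    rw [sum_choose_filter_reflect]
    refine sum_congr (filter_congr fun k hk => ?_) fun _ _ => rfl
    have := mem_range.1 hk
    simp only [compare_lt_iff_lt, compare_gt_iff_gt]
    omega
  have hE : ∑ k ∈ range (m + 1) with compare k b = .eq, m.choose k = b.centralBinom := by
    simp only [compare_eq_iff_eq, filter_eq', mem_range]
    rw [if_pos (by omega), sum_singleton, Nat.centralBinom_eq_two_mul_choose, two_mul]
  have h4 : (2 : ℕ) ^ m = 4 ^ b := by rw [show m = 2 * b by omega, pow_mul]; norm_num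
  have htotal : ∑ o : Ordering, ∑ k ∈ range (m + 1) with compare k b = o, m.choose k = 4 ^ b := by
    rw [sum_fiberwise, Nat.sum_range_choose, h4]
  rw [show (univ : Finset Ordering) = {.lt, .eq, .gt} from rfl] at htotal
  simp only [mem_insert, mem_singleton, reduceCtorEq, or_self, not_false_eq_true,
    sum_insert, sum_singleton, hE] at htotal
  rw [h4]
  obtain hb3 | hb4 : b < 3 ∨ 4 ≤ b := by omega
  · refine ⟨.eq, ?_⟩
    rw [hE]
    interval_cases b <;> decide
  · refine ⟨.gt, ?_⟩
    have := centralBinom_mul_four_pow_le hb4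
    rw [show Nat.centralBinom 4 = 70 from rfl] at this
    omega

theorem exists_compare_sum_choose_ge {a b : ℕ} (h33 : ¬(a = 3 ∧ b = 3)) :
    ∃ o : Ordering, 45 * 2 ^ (a + b) ≤
      128 * ∑ k ∈ range (a + b + 1) with compare k b = o, (a + b).choose k := by
  rcases lt_trichotomy b a with hba | rfl | hab
  · refine ⟨.gt, ?_⟩
    have := two_pow_le_two_mul_sum_choose_filter (m := a + b) (fun k => compare k b = .gt)
      fun k hk h => by simp only [compare_gt_iff_gt, not_lt] at h ⊢; omega
    omega
  · exact exists_compare_sum_choose_ge_of_eq fun hb => h33 ⟨hb, hb⟩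
  · refine ⟨.lt, ?_⟩
    have := two_pow_le_two_mul_sum_choose_filter (m := a + b) (fun k => compare k b = .lt)
      fun k hk h => by simp only [compare_lt_iff_lt, not_lt] at h ⊢; omega
    omega

theorem compare_card_symmDiff_inter {A B : Finset α} (hAB : Disjoint A B) (X : Finset α) :
    compare #(symmDiff X B ∩ (A ∪ B)) #B = weighOutcome A B X := by
  have hcap : symmDiff X B ∩ (A ∪ B) = X ∩ A ∪ B \ X := by
    ext x
    have : x ∈ A → x ∉ B := fun h => disjoint_left.1 hAB h
    simp only [mem_inter, mem_union, mem_symmDiff, mem_sdiff]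
    tauto
  rw [hcap, card_union_of_disjoint (hAB.mono inter_subset_right sdiff_subset),
    ← card_inter_add_card_sdiff B X, inter_comm B X, weighOutcome, ← cmp_eq_compare,
    ← cmp_eq_compare, cmp_add_right]

theorem two_pow_mul_card_filter_weighOutcome {S A B : Finset α} (hA : A ⊆ S) (hB : B ⊆ S)
    (hAB : Disjoint A B) (o : Ordering) :
    2 ^ #(A ∪ B) * #{X ∈ S.powerset | weighOutcome A B X = o} =
      2 ^ #S * ∑ k ∈ range (#(A ∪ B) + 1) with compare k #B = o, (#(A ∪ B)).choose k := by
  have hflip : #{X ∈ S.powerset | weighOutcome A B X = o} =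
      #{Y ∈ S.powerset | compare #(Y ∩ (A ∪ B)) #B = o} := by
    refine card_nbij' (symmDiff · B) (symmDiff · B) ?_ ?_
      (fun X _ => symmDiff_symmDiff_cancel_right B X)
      (fun Y _ => symmDiff_symmDiff_cancel_right B Y)
    · intro X hX
      simp only [coe_filter, mem_powerset, Set.mem_ofPred_eq] at hX ⊢
      exact ⟨symmDiff_subset_union.trans (union_subset hX.1 hB),
        (compare_card_symmDiff_inter hAB X).trans hX.2⟩
    · intro Y hY
      simp only [coe_filter, mem_powerset, Set.mem_ofPred_eq] at hY ⊢
      refine ⟨symmDiff_subset_union.trans (union_subset hY.1 hB), ?_⟩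
      rw [← compare_card_symmDiff_inter hAB, symmDiff_symmDiff_cancel_right]
      exact hY.2
  have hsplit := card_powerset_filter_eq_sum_choose (union_subset hA hB)
    (fun k (_ : Finset α) => compare k #B = o)
  simp only [filter_const, apply_ite card, card_powerset, card_empty] at hsplit
  rw [hflip, hsplit, sum_filter, mul_sum, mul_sum]
  refine sum_congr rfl fun k _ => ?_
  rw [← card_sdiff_add_card_eq_card (union_subset hA hB), pow_add]
  split_ifs <;> ring

theorem exists_outcome_card_ge {S A B : Finset α} (hA : A ⊆ S) (hB : B ⊆ S)
    (hAB : Disjoint A B) (h33 : ¬(#A = 3 ∧ #B = 3)) :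
    ∃ o : Ordering, 45 * 2 ^ #S ≤ 128 * #{X ∈ S.powerset | weighOutcome A B X = o} := by
  obtain ⟨o, ho⟩ := exists_compare_sum_choose_ge h33
  refine ⟨o, Nat.le_of_mul_le_mul_left ?_ (pow_pos two_pos #(A ∪ B))⟩
  have hcount := two_pow_mul_card_filter_weighOutcome hA hB hAB o
  rw [card_union_of_disjoint hAB] at hcount ⊢
  calc _ = 2 ^ #S * (45 * 2 ^ (#A + #B)) := by ring
    _ ≤ 2 ^ #S * (128 * _) := Nat.mul_le_mul_left _ ho
    _ = _ := by rw [mul_left_comm, ← hcount]; ring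

def pan (A B : Finset α) (x : α) : SignType := if x ∈ A then 1 else if x ∈ B then -1 else 0

theorem filter_pan_eq_one (A B X : Finset α) : {x ∈ X | pan A B x = 1} = X ∩ A := by
  ext x
  simp only [mem_filter, mem_inter]
  by_cases hA : x ∈ A <;> by_cases hB : x ∈ B <;> simp [pan, hA, hB]

theorem filter_pan_eq_neg_one {A B : Finset α} (hAB : Disjoint A B) (X : Finset α) :
    {x ∈ X | pan A B x = -1} = X ∩ B := by
  ext x
  simp only [mem_filter, mem_inter]
  by_cases hA : x ∈ A
  · simp [pan, hA, disjoint_left.1 hAB hA]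
  · by_cases hB : x ∈ B <;> simp [pan, hA, hB]

theorem card_filter_fst_eq_add {β : Type*} (f g : β → SignType) (X : Finset β) (s : SignType) :
    #{x ∈ X | f x = s} = #{x ∈ X | (f x, g x) = (s, 1)} + #{x ∈ X | (f x, g x) = (s, -1)} +
      #{x ∈ X | (f x, g x) = (s, 0)} := by
  rw [card_eq_sum_card_fiberwise (f := g) (t := univ) fun _ _ => mem_univ _, SignType.univ_eq,
    sum_insert (by decide), sum_insert (by decide), sum_singleton]
  simp only [filter_filter, Prod.mk.injEq]
  ring

theorem card_filter_snd_eq_add {β : Type*} (f g : β → SignType) (X : Finset β) (t : SignType) :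
    #{x ∈ X | g x = t} = #{x ∈ X | (f x, g x) = (1, t)} + #{x ∈ X | (f x, g x) = (-1, t)} +
      #{x ∈ X | (f x, g x) = (0, t)} := by
  rw [card_eq_sum_card_fiberwise (f := f) (t := univ) fun _ _ => mem_univ _, SignType.univ_eq,
    sum_insert (by decide), sum_insert (by decide), sum_singleton]
  simp only [filter_filter, Prod.mk.injEq, and_comm]
  ring

/-- The cell `(0, 0)`, of coins on neither scale, is left out: it affects neither outcome. -/
def pairCells : List (SignType × SignType) :=
  [(1, 1), (1, -1), (1, 0), (-1, 1), (-1, -1), (-1, 0), (0, 1), (0, -1)]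

def pairTest (o₁ o₂ : Ordering) : List ℕ → Bool
  | [k₁, k₂, k₃, k₄, k₅, k₆, k₇, k₈] =>
    compare (k₁ + k₂ + k₃) (k₄ + k₅ + k₆) == o₁ && compare (k₁ + k₄ + k₇) (k₂ + k₅ + k₈) == o₂
  | _ => false

theorem weighOutcome_and_weighOutcome_iff_pairTest {A₁ B₁ A₂ B₂ : Finset α}
    (h₁ : Disjoint A₁ B₁) (h₂ : Disjoint A₂ B₂) (X : Finset α) (o₁ o₂ : Ordering) :
    (weighOutcome A₁ B₁ X = o₁ ∧ weighOutcome A₂ B₂ X = o₂) ↔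
      pairTest o₁ o₂ (pairCells.map fun c => #{x ∈ X | (pan A₁ B₁ x, pan A₂ B₂ x) = c}) := by
  rw [weighOutcome, weighOutcome, ← filter_pan_eq_one, ← filter_pan_eq_neg_one h₁,
    ← filter_pan_eq_one, ← filter_pan_eq_neg_one h₂,
    card_filter_fst_eq_add (pan A₁ B₁) (pan A₂ B₂) X 1,
    card_filter_fst_eq_add (pan A₁ B₁) (pan A₂ B₂) X (-1),
    card_filter_snd_eq_add (pan A₁ B₁) (pan A₂ B₂) X 1,
    card_filter_snd_eq_add (pan A₁ B₁) (pan A₂ B₂) X (-1)]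
  simp [pairCells, pairTest]

/-- `a, b, c, d` are the sizes of the cells `A₁ ∩ A₂`, `A₁ ∩ B₂`, `B₁ ∩ A₂`, `B₁ ∩ B₂`; the other
four are determined by `|Aᵢ| = |Bᵢ| = 3`. -/
theorem exists_pairTest_profileCount_ge :
    ∀ a b c d : Fin 4, (a + b : ℕ) ≤ 3 → (c + d : ℕ) ≤ 3 → (a + c : ℕ) ≤ 3 → (b + d : ℕ) ≤ 3 →
      ∃ o₁ o₂ : Ordering,
        15 * 2 ^ [(a : ℕ), b, 3 - a - b, c, d, 3 - c - d, 3 - a - c, 3 - b - d].sum ≤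
          128 * profileCount (pairTest o₁ o₂)
            [a, b, 3 - a - b, c, d, 3 - c - d, 3 - a - c, 3 - b - d] := by
  decide +kernel

theorem exists_pair_outcomes_card_ge {S A₁ B₁ A₂ B₂ : Finset α} (hA₁ : A₁ ⊆ S) (hB₁ : B₁ ⊆ S)
    (hA₂ : A₂ ⊆ S) (hB₂ : B₂ ⊆ S) (h₁ : Disjoint A₁ B₁) (h₂ : Disjoint A₂ B₂)
    (c₁ : #A₁ = 3 ∧ #B₁ = 3) (c₂ : #A₂ = 3 ∧ #B₂ = 3) :
    ∃ o₁ o₂ : Ordering, 15 * 2 ^ #S ≤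
      128 * #{X ∈ S.powerset | weighOutcome A₁ B₁ X = o₁ ∧ weighOutcome A₂ B₂ X = o₂} := by
  set cell : α → SignType × SignType := fun x => (pan A₁ B₁ x, pan A₂ B₂ x)
  set n : SignType × SignType → ℕ := fun c => #{x ∈ S | cell x = c}
  have hA₁n : n (1, 1) + n (1, -1) + n (1, 0) = 3 := by
    rw [← c₁.1, ← inter_eq_right.2 hA₁, ← filter_pan_eq_one A₁ B₁,
      card_filter_fst_eq_add _ (pan A₂ B₂)]
  have hB₁n : n (-1, 1) + n (-1, -1) + n (-1, 0) = 3 := by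
    rw [← c₁.2, ← inter_eq_right.2 hB₁, ← filter_pan_eq_neg_one h₁,
      card_filter_fst_eq_add _ (pan A₂ B₂)]
  have hA₂n : n (1, 1) + n (-1, 1) + n (0, 1) = 3 := by
    rw [← c₂.1, ← inter_eq_right.2 hA₂, ← filter_pan_eq_one A₂ B₂,
      card_filter_snd_eq_add (pan A₁ B₁)]
  have hB₂n : n (1, -1) + n (-1, -1) + n (0, -1) = 3 := by
    rw [← c₂.2, ← inter_eq_right.2 hB₂, ← filter_pan_eq_neg_one h₂,
      card_filter_snd_eq_add (pan A₁ B₁)]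
  obtain ⟨o₁, o₂, ho⟩ := exists_pairTest_profileCount_ge ⟨n (1, 1), by omega⟩
    ⟨n (1, -1), by omega⟩ ⟨n (-1, 1), by omega⟩ ⟨n (-1, -1), by omega⟩
    (by dsimp only; omega) (by dsimp only; omega) (by dsimp only; omega) (by dsimp only; omega)
  have hsizes : pairCells.map n = [n (1, 1), n (1, -1), 3 - n (1, 1) - n (1, -1), n (-1, 1),
      n (-1, -1), 3 - n (-1, 1) - n (-1, -1), 3 - n (1, 1) - n (-1, 1),
      3 - n (1, -1) - n (-1, -1)] := by
    simp only [pairCells, List.map_cons, List.map_nil, List.cons.injEq, true_and, and_true]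
    omega
  have hcount := two_pow_sum_mul_card_powerset_filter_profile cell pairCells (by decide) S
    (pairTest o₁ o₂)
  rw [hsizes] at hcount
  refine ⟨o₁, o₂, Nat.le_of_mul_le_mul_left ?_ (pow_pos two_pos (pairCells.map n).sum)⟩
  rw [hsizes, filter_congr fun X _ => weighOutcome_and_weighOutcome_iff_pairTest h₁ h₂ X o₁ o₂]
  calc _ = 2 ^ #S * (15 * 2 ^ _) := by ring
    _ ≤ 2 ^ #S * (128 * profileCount (pairTest o₁ o₂) _) := Nat.mul_le_mul_left _ ho
    _ = _ := by rw [mul_left_comm, ← hcount]; ring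

end Weighing

open Weighing

/-- The bound `ζ₃ ≥ 5 · 2 ^ (n − 7)` used in the proof of Lemma 3: for any finite set `S`
with `|S| = n` and any three weighings `(A i, B i)`, `i = 1, 2, 3`, on `S`, there are
outcomes `v i ∈ {<, =, >}` such that `2 ^ 7` times the number of subsets `X ⊆ S` whose
outcome under `(A i, B i)` is `v i` for each `i` is at least `5 · 2 ^ n`. -/
theorem zeta_three_bound {α : Type*} [DecidableEq α]
    (S : Finset α) (n : ℕ) (hS : S.card = n)
    (A B : Fin 3 → Finset α)
    (hA : ∀ i, A i ⊆ S) (hB : ∀ i, B i ⊆ S) (hAB : ∀ i, Disjoint (A i) (B i)) :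
    ∃ v : Fin 3 → Ordering,
      5 * 2 ^ n ≤ 2 ^ 7 * (S.powerset.filter
        (fun X => ∀ i, weighOutcome (A i) (B i) X = v i)).card := by
  subst hS
  have hOrd : Fintype.card Ordering = 3 := rfl
  by_cases hbal : ∀ i, #(A i) = 3 ∧ #(B i) = 3
  · obtain ⟨o₁, o₂, h⟩ := exists_pair_outcomes_card_ge (hA 0) (hB 0) (hA 1) (hB 1)
      (hAB 0) (hAB 1) (hbal 0) (hbal 1)
    obtain ⟨v, hv⟩ := exists_card_filter_le_mul_card_filter S.powerset
      (fun X i => weighOutcome (A i) (B i) X) {0, 1} ![o₁, o₂, o₁]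
    have hcompl : #({0, 1} : Finset (Fin 3))ᶜ = 1 := rfl
    simp only [mem_insert, mem_singleton, forall_eq_or_imp, forall_eq, Matrix.cons_val_zero,
      Matrix.cons_val_one, hOrd, hcompl] at hv
    refine ⟨v, ?_⟩
    -- `convert` reconciles the two `Decidable` instances of `∀ i : Fin 3, _` in the filters
    convert (by omega : ∀ a b c : ℕ, 15 * a ≤ 128 * b → b ≤ 3 ^ 1 * c → 5 * a ≤ 2 ^ 7 * c)
      _ _ _ h hv
  · obtain ⟨i, hi⟩ := not_forall.1 hbal
    obtain ⟨o, h⟩ := exists_outcome_card_ge (hA i) (hB i) (hAB i) hi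
    obtain ⟨v, hv⟩ := exists_card_filter_le_mul_card_filter S.powerset
      (fun X i => weighOutcome (A i) (B i) X) {i} fun _ => o
    have hcompl : #({i} : Finset (Fin 3))ᶜ = 2 := by
      rw [card_compl, card_singleton, Fintype.card_fin]
    simp only [mem_singleton, forall_eq, hOrd, hcompl] at hv
    refine ⟨v, ?_⟩
    convert (by omega : ∀ a b c : ℕ, 45 * a ≤ 128 * b → b ≤ 3 ^ 2 * c → 5 * a ≤ 2 ^ 7 * c)
      _ _ _ h hv
end
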